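/- arXiv:2001.06837 — 5 statements merged into one kernel-verified Lean document; each statement's English description precedes it below -/
import Mathlib

section
/- Let b : ℝ → ℝ be bounded and Lipschitz and m : ℝ → ℝ be bounded and Lipschitz with m ≥ 0, and for ξ ∈ ℝⁿ set ⟨ξ⟩_{m(r)} = √(|ξ|² + m(r)²). Define the oscillatory integrals n^±(t,ξ) = ∫₀ᵗ exp(∓ i ∫ₛᵗ ⟨ξ⟩_{m(r)} dr) b(s) ds. Then there exists a constant C > 0, depending only on sup|b|, the Lipschitz constant of b, sup m and the Lipschitz constant of m, such that |n^±(t,ξ)| ≤ C(1+t)/|ξ| for all t ≥ 0 and all ξ ≠ 0. In particular n^±(t,ξ) → 0 as |ξ| → ∞, uniformly on bounded t-intervals. -/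
/-!
Write `F u = exp (σ i ∫ᵤᵗ ⟨ξ⟩_{m(r)} dr)` and `g = b / ⟨ξ⟩_m`. Then `F' = -σ i ⟨ξ⟩_m F`, so the
integrand `F b` equals `F' g` up to the factor `(-σ i)⁻¹`, and integrating by parts bounds the
integral by `2 sup|g| + t Lip(g)`. Since `⟨ξ⟩_m ≥ |ξ|` and `x ↦ √(|ξ|² + x²)` is `1`-Lipschitz,
`sup|g| ≤ sup|b| / |ξ|` and `Lip(g) ≤ Lip(b) / |ξ| + sup|b| Lip(m) / |ξ|²`, which gives
`C (1 + t) / |ξ|` for `|ξ| ≥ 1`; for `|ξ| ≤ 1` the trivial bound `t sup|b|` suffices.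
As `g` is merely Lipschitz, the integration by parts rests on Rademacher's theorem and on the
constancy of absolutely continuous functions with almost everywhere vanishing derivative.
-/

noncomputable section
open MeasureTheory Matrix Complex

/-- The oscillatory integral `∫₀ᵗ exp(σ i ∫ᵤᵗ ⟨ξ⟩_{m(r)} dr) b(u) du`, where
`⟨ξ⟩_{m(r)} = √(|ξ|² + m(r)²)`; `σ = -1` gives `n⁺` and `σ = 1` gives `n⁻`. -/
def oscInt {n : ℕ} (b m : ℝ → ℝ) (σ : ℝ) (t : ℝ) (ξ : EuclideanSpace ℝ (Fin n)) : ℂ :=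
  ∫ u in (0:ℝ)..t,
    Complex.exp ((σ : ℂ) * Complex.I *
      ((∫ r in u..t, Real.sqrt (‖ξ‖ ^ 2 + m r ^ 2) : ℝ) : ℂ)) * (b u : ℂ)


open Set Filter Topology
open scoped NNReal

section

theorem ae_uIcc_mem_nhds (a b : ℝ) : ∀ᵐ x, x ∈ uIcc a b → uIcc a b ∈ 𝓝 x := by
  filter_upwards [Measure.ae_ne volume a, Measure.ae_ne volume b] with x hxa hxb hx
  rcases hx with ⟨h₁, h₂⟩
  refine Icc_mem_nhds (lt_of_le_of_ne h₁ ?_) (lt_of_le_of_ne h₂ ?_)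
  · rcases min_choice a b with h | h <;> rw [h] <;> grind
  · rcases max_choice a b with h | h <;> rw [h] <;> grind

variable {E : Type*} [NormedAddCommGroup E] [NormedSpace ℝ E] {f : ℝ → E} {K : ℝ≥0} {a b : ℝ}

theorem LipschitzOnWith.ae_norm_deriv_le (hf : LipschitzOnWith K f (uIcc a b)) :
    ∀ᵐ x, x ∈ uIcc a b → ‖deriv f x‖ ≤ K := by
  filter_upwards [ae_uIcc_mem_nhds a b] with x hx hxab
  exact norm_deriv_le_of_lipschitzOn (hx hxab) hf

theorem LipschitzOnWith.intervalIntegrable_deriv [CompleteSpace E]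
    (hf : LipschitzOnWith K f (uIcc a b)) :
    IntervalIntegrable (deriv f) volume a b := by
  refine (intervalIntegrable_const (c := (K : ℝ))).mono_fun'
    (stronglyMeasurable_deriv f).aestronglyMeasurable ?_
  rw [EventuallyLE, ae_restrict_iff' measurableSet_uIoc]
  filter_upwards [hf.ae_norm_deriv_le] with x hx hxab
  exact hx (uIoc_subset_uIcc hxab)

theorem LipschitzOnWith.integral_deriv_eq_sub [FiniteDimensional ℝ E]
    (hf : LipschitzOnWith K f (uIcc a b)) :
    ∫ x in a..b, deriv f x = f b - f a := by
  have : CompleteSpace E := FiniteDimensional.complete ℝ E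
  have hint := hf.intervalIntegrable_deriv
  set G : ℝ → E := fun x => f x - ∫ t in a..x, deriv f t
  have hG : LipschitzOnWith (K + K) G (uIcc a b) := by
    refine hf.sub (LipschitzOnWith.of_dist_le_mul fun x hx y hy => ?_)
    rw [dist_eq_norm, intervalIntegral.integral_interval_sub_left
      (hint.mono_set (uIcc_subset_uIcc left_mem_uIcc hx))
      (hint.mono_set (uIcc_subset_uIcc left_mem_uIcc hy)), Real.dist_eq]
    refine intervalIntegral.norm_integral_le_of_norm_le_const_ae (f := deriv f) ?_
    filter_upwards [hf.ae_norm_deriv_le] with t ht hty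
    exact ht (uIcc_subset_uIcc hy hx (uIoc_subset_uIcc hty))
  have hG' : ∀ᵐ x, x ∈ uIcc a b → HasDerivAt G 0 x := by
    filter_upwards [hf.ae_differentiableWithinAt_of_mem_real, ae_uIcc_mem_nhds a b,
      hint.ae_hasDerivAt_integral] with x hdiff hnhds hprim hx
    have := ((hdiff hx).differentiableAt (hnhds hx)).hasDerivAt.sub (hprim hx a left_mem_uIcc)
    rwa [sub_self] at this
  obtain ⟨C, hC⟩ := hG.absolutelyContinuousOnInterval.const_of_ae_hasDerivAt_zero hG'
  have hGa := hC a left_mem_uIcc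
  have hGb := hC b right_mem_uIcc
  simp only [G, intervalIntegral.integral_same, sub_zero] at hGa hGb
  rw [hGa, ← hGb]
  abel

theorem LipschitzOnWith.mul_of_norm_le {X R : Type*} [PseudoMetricSpace X] [SeminormedRing R]
    {f g : X → R} {s : Set X} {Kf Kg Mf Mg : ℝ≥0}
    (hf : LipschitzOnWith Kf f s) (hg : LipschitzOnWith Kg g s)
    (hfM : ∀ x ∈ s, ‖f x‖ ≤ Mf) (hgM : ∀ x ∈ s, ‖g x‖ ≤ Mg) :
    LipschitzOnWith (Mf * Kg + Kf * Mg) (fun x => f x * g x) s := by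
  refine LipschitzOnWith.of_dist_le_mul fun x hx y hy => ?_
  have hfxy := hf.dist_le_mul x hx y hy
  have hgxy := hg.dist_le_mul x hx y hy
  rw [dist_eq_norm] at hfxy hgxy ⊢
  calc ‖f x * g x - f y * g y‖ = ‖f x * (g x - g y) + (f x - f y) * g y‖ := by noncomm_ring
    _ ≤ ‖f x‖ * ‖g x - g y‖ + ‖f x - f y‖ * ‖g y‖ :=
      (norm_add_le _ _).trans (add_le_add (norm_mul_le _ _) (norm_mul_le _ _))
    _ ≤ Mf * (Kg * dist x y) + Kf * dist x y * Mg := by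
      gcongr
      · exact hfM x hx
      · exact hgM y hy
    _ = ↑(Mf * Kg + Kf * Mg) * dist x y := by push_cast; ring

variable {A : Type*} [NormedRing A] [NormedAlgebra ℝ A] [FiniteDimensional ℝ A]

theorem LipschitzOnWith.integral_deriv_mul_eq_sub {F g : ℝ → A} {KF Kg : ℝ≥0}
    (hF : LipschitzOnWith KF F (uIcc a b)) (hg : LipschitzOnWith Kg g (uIcc a b)) :
    ∫ x in a..b, deriv F x * g x + F x * deriv g x = F b * g b - F a * g a := by
  obtain ⟨MF, hMF⟩ := isCompact_uIcc.exists_bound_of_continuousOn hF.continuousOn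
  obtain ⟨Mg, hMg⟩ := isCompact_uIcc.exists_bound_of_continuousOn hg.continuousOn
  have hFg := hF.mul_of_norm_le hg (fun x hx => (hMF x hx).trans (Real.le_coe_toNNReal MF))
    (fun x hx => (hMg x hx).trans (Real.le_coe_toNNReal Mg))
  rw [← hFg.integral_deriv_eq_sub]
  refine intervalIntegral.integral_congr_ae ?_
  filter_upwards [hF.ae_differentiableWithinAt_of_mem_real,
    hg.ae_differentiableWithinAt_of_mem_real, ae_uIcc_mem_nhds a b] with x hFx hgx hnhds hx
  have hx := uIoc_subset_uIcc hx
  exact (((hFx hx).differentiableAt (hnhds hx)).hasDerivAt.mul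
    ((hgx hx).differentiableAt (hnhds hx)).hasDerivAt).deriv.symm

theorem LipschitzOnWith.norm_integral_deriv_mul_le {F g : ℝ → A} {KF Kg : ℝ≥0} {MF Mg : ℝ}
    (hF : LipschitzOnWith KF F (uIcc a b)) (hg : LipschitzOnWith Kg g (uIcc a b))
    (hFM : ∀ x ∈ uIcc a b, ‖F x‖ ≤ MF) (hgM : ∀ x ∈ uIcc a b, ‖g x‖ ≤ Mg) :
    ‖∫ x in a..b, deriv F x * g x‖ ≤ 2 * MF * Mg + MF * Kg * |b - a| := by
  have hMF : 0 ≤ MF := (norm_nonneg _).trans (hFM a left_mem_uIcc)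
  have hparts : ∫ x in a..b, deriv F x * g x
      = (F b * g b - F a * g a) - ∫ x in a..b, F x * deriv g x := by
    rw [← hF.integral_deriv_mul_eq_sub hg, intervalIntegral.integral_add
      (hF.intervalIntegrable_deriv.mul_continuousOn hg.continuousOn)
      (hg.intervalIntegrable_deriv.continuousOn_mul hF.continuousOn), add_sub_cancel_right]
  have hboundary : ‖F b * g b - F a * g a‖ ≤ 2 * MF * Mg := by
    have hprod : ∀ x ∈ uIcc a b, ‖F x * g x‖ ≤ MF * Mg := fun x hx =>
      (norm_mul_le _ _).trans (mul_le_mul (hFM x hx) (hgM x hx) (norm_nonneg _) hMF)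
    linarith [_root_.norm_sub_le (F b * g b) (F a * g a), hprod a left_mem_uIcc,
      hprod b right_mem_uIcc]
  have hremainder : ‖∫ x in a..b, F x * deriv g x‖ ≤ MF * Kg * |b - a| := by
    refine intervalIntegral.norm_integral_le_of_norm_le_const_ae ?_
    filter_upwards [hg.ae_norm_deriv_le] with x hx hxab
    have hx' := uIoc_subset_uIcc hxab
    exact (norm_mul_le _ _).trans (mul_le_mul (hFM x hx') (hx hx') (norm_nonneg _) hMF)
  rw [hparts]
  linarith [_root_.norm_sub_le (F b * g b - F a * g a) (∫ x in a..b, F x * deriv g x)]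

end

theorem lipschitzWith_sqrt_sq_add_sq (c : ℝ) :
    LipschitzWith 1 fun x : ℝ => √(c ^ 2 + x ^ 2) := by
  refine LipschitzWith.of_dist_le_mul fun x y => ?_
  rw [Real.dist_eq, Real.dist_eq, NNReal.coe_one, one_mul, ← Complex.norm_add_mul_I,
    ← Complex.norm_add_mul_I]
  calc |‖(c : ℂ) + x * Complex.I‖ - ‖(c : ℂ) + y * Complex.I‖|
      ≤ ‖((c : ℂ) + x * Complex.I) - ((c : ℂ) + y * Complex.I)‖ := abs_norm_sub_norm_le _ _
    _ = |x - y| := by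
      rw [add_sub_add_left_eq_sub, ← sub_mul, norm_mul, Complex.norm_I, mul_one,
        ← Complex.ofReal_sub, Complex.norm_real, Real.norm_eq_abs]

theorem LipschitzWith.inv_of_le {X : Type*} [PseudoMetricSpace X] {f : X → ℝ} {K k : ℝ≥0}
    (hf : LipschitzWith K f) (hk : 0 < k) (hfk : ∀ x, k ≤ f x) :
    LipschitzWith (K / k ^ 2) fun x => (f x)⁻¹ := by
  refine LipschitzWith.of_dist_le_mul fun x y => ?_
  have hpos : ∀ z, 0 < f z := fun z => (NNReal.coe_pos.2 hk).trans_le (hfk z)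
  rw [dist_inv_inv₀ (hpos x).ne' (hpos y).ne', Real.norm_eq_abs, Real.norm_eq_abs,
    abs_of_pos (hpos x), abs_of_pos (hpos y), NNReal.coe_div, NNReal.coe_pow, div_mul_eq_mul_div]
  gcongr
  · exact hf.dist_le_mul x y
  · rw [sq]; exact mul_le_mul (hfk x) (hfk y) k.coe_nonneg (hpos x).le

theorem hasDerivAt_cexp_mul_integral_left {h : ℝ → ℝ} (hh : Continuous h) (c : ℂ) (t u : ℝ) :
    HasDerivAt (fun u => exp (c * ↑(∫ r in u..t, h r)))
      (exp (c * ↑(∫ r in u..t, h r)) * (c * ↑(-h u))) u :=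
  ((intervalIntegral.integral_hasDerivAt_left (hh.intervalIntegrable u t)
    hh.aestronglyMeasurable.stronglyMeasurableAtFilter hh.continuousAt).ofReal_comp.const_mul
      c).cexp

section oscInt

variable {n : ℕ} {b m : ℝ → ℝ} {Cb : ℝ} {Lb Lm : ℝ≥0}

theorem norm_oscInt_le_mul_abs (hb_bdd : ∀ t, |b t| ≤ Cb) (σ t : ℝ)
    (ξ : EuclideanSpace ℝ (Fin n)) : ‖oscInt b m σ t ξ‖ ≤ Cb * |t| := by
  unfold oscInt
  simpa using intervalIntegral.norm_integral_le_of_norm_le_const (a := 0) (b := t) (C := Cb)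
    fun u _ => by simpa [Complex.norm_exp] using hb_bdd u

theorem norm_oscInt_le (hb_bdd : ∀ t, |b t| ≤ Cb) (hb_lip : LipschitzWith Lb b)
    (hm_lip : LipschitzWith Lm m) {σ : ℝ} (hσ : σ ≠ 0) (t : ℝ)
    {ξ : EuclideanSpace ℝ (Fin n)} (hξ : ξ ≠ 0) :
    ‖oscInt b m σ t ξ‖ ≤ (2 * Cb + (Lb + Cb * Lm / ‖ξ‖) * |t|) / (|σ| * ‖ξ‖) := by
  set k : ℝ≥0 := ‖ξ‖₊
  have hk : 0 < k := nnnorm_pos.2 hξ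
  set h : ℝ → ℝ := fun r => √(‖ξ‖ ^ 2 + m r ^ 2)
  have hh_ge : ∀ r, (k : ℝ) ≤ h r := fun r =>
    Real.le_sqrt_of_sq_le (le_add_of_nonneg_right (sq_nonneg _))
  have hh_pos : ∀ r, 0 < h r := fun r => (NNReal.coe_pos.2 hk).trans_le (hh_ge r)
  have hh_lip : LipschitzWith Lm h := by
    have := (lipschitzWith_sqrt_sq_add_sq ‖ξ‖).comp hm_lip
    rwa [one_mul] at this
  set F : ℝ → ℂ := fun u => exp (σ * I * ↑(∫ r in u..t, h r))
  have hF : ∀ u, HasDerivAt F (F u * (σ * I * ↑(-h u))) u :=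
    hasDerivAt_cexp_mul_integral_left hh_lip.continuous _ t
  have hF_norm : ∀ u, ‖F u‖ = 1 := fun u => by simp [F, Complex.norm_exp]
  obtain ⟨KF, hF_lip⟩ : ∃ KF, LipschitzOnWith KF F (uIcc 0 t) := by
    have hderiv : deriv F = fun u => F u * (σ * I * ↑(-h u)) := funext fun u => (hF u).deriv
    have hF_cont : Continuous F := continuous_iff_continuousAt.2 fun u => (hF u).continuousAt
    have hF_C1 : ContDiff ℝ 1 F := contDiff_one_iff_deriv.2 ⟨fun u => (hF u).differentiableAt,
      hderiv ▸ hF_cont.mul (continuous_const.mul (continuous_ofReal.comp hh_lip.continuous.neg))⟩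
    exact hF_C1.locallyLipschitz.locallyLipschitzOn.exists_lipschitzOnWith_of_compact
      isCompact_uIcc
  set g : ℝ → ℂ := fun u => ↑(b u * (h u)⁻¹)
  have hg_norm : ∀ u, ‖g u‖ ≤ Cb / k := fun u => by
    rw [Complex.norm_real, norm_mul, norm_inv, Real.norm_eq_abs, Real.norm_eq_abs,
      abs_of_pos (hh_pos u), ← div_eq_mul_inv]
    exact div_le_div₀ ((abs_nonneg _).trans (hb_bdd 0)) (hb_bdd u) (NNReal.coe_pos.2 hk)
      (hh_ge u)
  have hg_lip : LipschitzOnWith (Cb.toNNReal * (Lm / k ^ 2) + Lb * k⁻¹) g (uIcc 0 t) := by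
    have := hb_lip.lipschitzOnWith.mul_of_norm_le (s := uIcc 0 t)
      (hh_lip.inv_of_le hk hh_ge).lipschitzOnWith (Mg := k⁻¹)
      (fun u _ => (hb_bdd u).trans (Real.le_coe_toNNReal Cb)) (fun u _ => ?_)
    · have := Complex.isometry_ofReal.lipschitz.comp_lipschitzOnWith this
      rwa [one_mul] at this
    · rw [norm_inv, Real.norm_eq_abs, abs_of_pos (hh_pos u), NNReal.coe_inv]
      exact inv_anti₀ (NNReal.coe_pos.2 hk) (hh_ge u)
  have hosc : oscInt b m σ t ξ = (-(σ * I))⁻¹ * ∫ u in (0:ℝ)..t, deriv F u * g u := by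
    rw [← intervalIntegral.integral_const_mul]
    refine intervalIntegral.integral_congr fun u _ => ?_
    have : (h u : ℂ) ≠ 0 := Complex.ofReal_ne_zero.2 (hh_pos u).ne'
    have : (σ : ℂ) ≠ 0 := Complex.ofReal_ne_zero.2 hσ
    simp only [(hF u).deriv, g, F]
    push_cast
    field_simp
    exact mul_comm _ _
  calc ‖oscInt b m σ t ξ‖ = |σ|⁻¹ * ‖∫ u in (0:ℝ)..t, deriv F u * g u‖ := by
        simp [hosc]
    _ ≤ |σ|⁻¹ * (2 * 1 * (Cb / k) + 1 * ↑(Cb.toNNReal * (Lm / k ^ 2) + Lb * k⁻¹) * |t - 0|) := by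
        gcongr
        exact hF_lip.norm_integral_deriv_mul_le hg_lip (fun u _ => (hF_norm u).le)
          (fun u _ => hg_norm u)
    _ = (2 * Cb + (Lb + Cb * Lm / ‖ξ‖) * |t|) / (|σ| * ‖ξ‖) := by
        have hk' : (k : ℝ) = ‖ξ‖ := coe_nnnorm ξ
        push_cast
        rw [Real.coe_toNNReal _ ((abs_nonneg _).trans (hb_bdd 0)), hk', sub_zero]
        field_simp
        ring

theorem norm_oscInt_le_mul_one_add_div (hb_bdd : ∀ t, |b t| ≤ Cb) (hb_lip : LipschitzWith Lb b)
    (hm_lip : LipschitzWith Lm m) {σ : ℝ} (hσ : |σ| = 1) {t : ℝ} (ht : 0 ≤ t)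
    {ξ : EuclideanSpace ℝ (Fin n)} (hξ : ξ ≠ 0) :
    ‖oscInt b m σ t ξ‖ ≤ (2 * Cb + Lb + Cb * Lm + 1) * (1 + t) / ‖ξ‖ := by
  have hCb : 0 ≤ Cb := (abs_nonneg _).trans (hb_bdd 0)
  have hξ_pos : 0 < ‖ξ‖ := norm_pos_iff.2 hξ
  rw [le_div_iff₀ hξ_pos]
  rcases le_total ‖ξ‖ 1 with hξ1 | hξ1
  · calc ‖oscInt b m σ t ξ‖ * ‖ξ‖ ≤ Cb * t * 1 := by
          gcongr
          simpa [abs_of_nonneg ht] using norm_oscInt_le_mul_abs hb_bdd σ t ξ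
      _ ≤ (2 * Cb + Lb + Cb * Lm + 1) * (1 + t) := by nlinarith [mul_nonneg hCb ht]
  · have hbound := norm_oscInt_le hb_bdd hb_lip hm_lip (σ := σ) (by grind) t hξ
    rw [hσ, one_mul, le_div_iff₀ hξ_pos, abs_of_nonneg ht] at hbound
    have hLm : Cb * Lm / ‖ξ‖ ≤ Cb * Lm := div_le_self (by positivity) hξ1
    calc ‖oscInt b m σ t ξ‖ * ‖ξ‖ ≤ 2 * Cb + (Lb + Cb * Lm / ‖ξ‖) * t := hbound
      _ ≤ (2 * Cb + Lb + Cb * Lm + 1) * (1 + t) := by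
        nlinarith [mul_le_mul_of_nonneg_right hLm ht]

end oscInt

theorem oscillatory_integral_bound_general
    {n : ℕ} (b m : ℝ → ℝ)
    (Cb : ℝ) (hb_bdd : ∀ t, |b t| ≤ Cb) (Lb : NNReal) (hb_lip : LipschitzWith Lb b)
    (Lm : NNReal) (hm_lip : LipschitzWith Lm m) :
    ∃ C > (0 : ℝ),
      (∀ t ≥ (0 : ℝ), ∀ ξ : EuclideanSpace ℝ (Fin n), ξ ≠ 0 →
        ‖oscInt b m (-1) t ξ‖ ≤ C * (1 + t) / ‖ξ‖ ∧
        ‖oscInt b m 1 t ξ‖ ≤ C * (1 + t) / ‖ξ‖) ∧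
      (∀ ε > (0 : ℝ), ∀ t₁ ≥ (0 : ℝ), ∃ R > (0 : ℝ),
        ∀ ξ : EuclideanSpace ℝ (Fin n), R ≤ ‖ξ‖ → ∀ t ∈ Set.Icc (0 : ℝ) t₁,
          ‖oscInt b m (-1) t ξ‖ ≤ ε ∧ ‖oscInt b m 1 t ξ‖ ≤ ε) := by
  set C := 2 * Cb + Lb + Cb * Lm + 1
  have hC : 0 < C := by have := (abs_nonneg _).trans (hb_bdd 0); positivity
  have hbound : ∀ σ : ℝ, |σ| = 1 → ∀ t ≥ (0 : ℝ), ∀ ξ : EuclideanSpace ℝ (Fin n), ξ ≠ 0 →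
      ‖oscInt b m σ t ξ‖ ≤ C * (1 + t) / ‖ξ‖ := fun σ hσ t ht ξ hξ =>
    norm_oscInt_le_mul_one_add_div hb_bdd hb_lip hm_lip hσ ht hξ
  refine ⟨C, hC, fun t ht ξ hξ => ⟨hbound (-1) (by simp) t ht ξ hξ, hbound 1 (by simp) t ht ξ hξ⟩,
    fun ε hε t₁ ht₁ => ⟨max 1 (C * (1 + t₁) / ε), by positivity, fun ξ hR t ht => ?_⟩⟩
  have hξ_pos : 0 < ‖ξ‖ := one_pos.trans_le ((le_max_left _ _).trans hR)
  have hsmall : C * (1 + t) / ‖ξ‖ ≤ ε :=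
    calc C * (1 + t) / ‖ξ‖ ≤ C * (1 + t₁) / (C * (1 + t₁) / ε) := by
          gcongr
          exacts [ht.2, (le_max_right _ _).trans hR]
      _ = ε := by field_simp
  exact ⟨(hbound (-1) (by simp) t ht.1 ξ (norm_pos_iff.1 hξ_pos)).trans hsmall,
    (hbound 1 (by simp) t ht.1 ξ (norm_pos_iff.1 hξ_pos)).trans hsmall⟩

/-- The off-diagonal entries `n^±(t,ξ)` of the diagonalizer satisfy
`|n^±(t,ξ)| ≤ C(1+t)/|ξ|`; in particular `n^±(t,ξ) → 0` as `|ξ| → ∞`,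
uniformly on bounded `t`-intervals. -/
theorem oscillatory_integral_bound
    {n : ℕ} (b m : ℝ → ℝ)
    (Cb : ℝ) (hb_bdd : ∀ t, |b t| ≤ Cb) (Lb : NNReal) (hb_lip : LipschitzWith Lb b)
    (Cm : ℝ) (hm_bdd : ∀ t, m t ≤ Cm) (hm_nonneg : ∀ t, 0 ≤ m t)
    (Lm : NNReal) (hm_lip : LipschitzWith Lm m) :
    ∃ C > (0 : ℝ),
      (∀ t ≥ (0 : ℝ), ∀ ξ : EuclideanSpace ℝ (Fin n), ξ ≠ 0 →
        ‖oscInt b m (-1) t ξ‖ ≤ C * (1 + t) / ‖ξ‖ ∧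
        ‖oscInt b m 1 t ξ‖ ≤ C * (1 + t) / ‖ξ‖) ∧
      (∀ ε > (0 : ℝ), ∀ t₁ ≥ (0 : ℝ), ∃ R > (0 : ℝ),
        ∀ ξ : EuclideanSpace ℝ (Fin n), R ≤ ‖ξ‖ → ∀ t ∈ Set.Icc (0 : ℝ) t₁,
          ‖oscInt b m (-1) t ξ‖ ≤ ε ∧ ‖oscInt b m 1 t ξ‖ ≤ ε) :=
  oscillatory_integral_bound_general b m Cb hb_bdd Lb hb_lip Lm hm_lip
end
end

section
/- Let a : ℝ → ℝ be continuous and real-valued and b : ℝ → ℝ be continuous with b(t) ≥ 0 for all t, and set A(t) = [[0, a(t)], [a(t), 2ib(t)]] ∈ M₂(ℂ). Then the fundamental solution E(t,s) of ∂ₜE = iA(t)E, E(s,s) = I, is a contraction for forward times: ‖E(t,s)‖ ≤ 1 for all t ≥ s. -/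
noncomputable section
open MeasureTheory Matrix Complex
open scoped Matrix.Norms.L2Operator

/-- extract (M *ᵥ v) i as a continuous linear map in M -/
def mulVecEntryCLM (v : Fin 2 → ℂ) (i : Fin 2) : Matrix (Fin 2) (Fin 2) ℂ →L[ℂ] ℂ :=
  LinearMap.toContinuousLinearMap
    { toFun := fun M => (M *ᵥ v) i
      map_add' := by intros; simp [Matrix.add_mulVec]
      map_smul' := by intros; simp [Matrix.smul_mulVec] }

/-- For `A(t) = [[0, a(t)], [a(t), 2ib(t)]]` with real `a` and `b ≥ 0`, the
fundamental solution of `∂ₜE = iA(t)E`, `E(s,s) = I`, is a contraction for forward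
times: `‖E(t,s)‖ ≤ 1` for `t ≥ s`. -/
theorem fundamental_solution_contraction
    (a b : ℝ → ℝ) (ha_cont : Continuous a) (hb_cont : Continuous b)
    (hb_nonneg : ∀ t, 0 ≤ b t)
    (E : ℝ → ℝ → Matrix (Fin 2) (Fin 2) ℂ)
    (hE_deriv : ∀ s t, HasDerivAt (fun τ => E τ s)
      (Complex.I • (!![0, (a t : ℂ); (a t : ℂ), 2 * Complex.I * (b t : ℂ)] * E t s)) t)
    (hE_init : ∀ s, E s s = 1) :
    ∀ s t : ℝ, s ≤ t → ‖E t s‖ ≤ 1 := by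
  intro s t hst
  rw [Matrix.l2_opNorm_def]
  refine ContinuousLinearMap.opNorm_le_bound _ zero_le_one fun x => ?_
  rw [one_mul]
  set v : Fin 2 → ℂ := WithLp.equiv 2 (Fin 2 → ℂ) x with hv
  -- the vector trajectory
  set w : ℝ → Fin 2 → ℂ := fun τ => E τ s *ᵥ v with hw
  -- energy
  set g : ℝ → ℝ := fun τ => normSq (w τ 0) + normSq (w τ 1) with hg
  -- derivative of each component
  have hWderiv : ∀ (τ : ℝ) (i : Fin 2), HasDerivAt (fun σ => w σ i)
      (((Complex.I • (!![0, (a τ : ℂ); (a τ : ℂ), 2 * Complex.I * (b τ : ℂ)] * E τ s)) *ᵥ v) i) τ := by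
    intro τ i
    exact ((mulVecEntryCLM v i).restrictScalars ℝ).hasFDerivAt.comp_hasDerivAt τ (hE_deriv s τ)
  have hW0 : ∀ τ : ℝ, HasDerivAt (fun σ => w σ 0)
      (Complex.I * ((a τ : ℂ) * w τ 1)) τ := by
    intro τ
    convert hWderiv τ 0 using 1
    simp only [hw, Matrix.smul_mulVec, Pi.smul_apply, smul_eq_mul]
    rw [← Matrix.mulVec_mulVec]
    simp [Matrix.mulVec, dotProduct, Fin.sum_univ_two]
  have hW1 : ∀ τ : ℝ, HasDerivAt (fun σ => w σ 1)
      (Complex.I * ((a τ : ℂ) * w τ 0 + 2 * Complex.I * (b τ : ℂ) * w τ 1)) τ := by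
    intro τ
    convert hWderiv τ 1 using 1
    simp only [hw, Matrix.smul_mulVec, Pi.smul_apply, smul_eq_mul]
    rw [← Matrix.mulVec_mulVec]
    simp [Matrix.mulVec, dotProduct, Fin.sum_univ_two]
  -- derivative of the energy
  have hgderiv : ∀ τ : ℝ, HasDerivAt g (-(4 * b τ * normSq (w τ 1))) τ := by
    intro τ
    have h0 := hW0 τ
    have h1 := hW1 τ
    have h0re : HasDerivAt (fun σ => (w σ 0).re) (Complex.I * ((a τ : ℂ) * w τ 1)).re τ :=
      Complex.reCLM.hasFDerivAt.comp_hasDerivAt τ h0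
    have h0im : HasDerivAt (fun σ => (w σ 0).im) (Complex.I * ((a τ : ℂ) * w τ 1)).im τ :=
      Complex.imCLM.hasFDerivAt.comp_hasDerivAt τ h0
    have h1re : HasDerivAt (fun σ => (w σ 1).re)
        (Complex.I * ((a τ : ℂ) * w τ 0 + 2 * Complex.I * (b τ : ℂ) * w τ 1)).re τ :=
      Complex.reCLM.hasFDerivAt.comp_hasDerivAt τ h1
    have h1im : HasDerivAt (fun σ => (w σ 1).im)
        (Complex.I * ((a τ : ℂ) * w τ 0 + 2 * Complex.I * (b τ : ℂ) * w τ 1)).im τ :=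
      Complex.imCLM.hasFDerivAt.comp_hasDerivAt τ h1
    have := (((h0re.mul h0re).add (h0im.mul h0im)).add ((h1re.mul h1re).add (h1im.mul h1im)))
    have heq : g = fun σ => ((w σ 0).re * (w σ 0).re + (w σ 0).im * (w σ 0).im) +
        ((w σ 1).re * (w σ 1).re + (w σ 1).im * (w σ 1).im) := by
      funext σ; simp [hg, Complex.normSq_apply]
    rw [heq]
    convert this using 1
    case e'_4 => rfl
    case e'_5 => rfl
    case e'_8 => rfl
    simp only [Complex.mul_re, Complex.mul_im, Complex.add_re, Complex.add_im,
      Complex.I_re, Complex.I_im, Complex.ofReal_re, Complex.ofReal_im,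
      Complex.normSq_apply, Complex.re_ofNat, Complex.im_ofNat]
    ring
  -- g is antitone
  have hanti : Antitone g := by
    refine antitone_of_deriv_nonpos (fun τ => (hgderiv τ).differentiableAt) fun τ => ?_
    rw [(hgderiv τ).deriv]
    have := hb_nonneg τ
    have h2 : 0 ≤ normSq (w τ 1) := Complex.normSq_nonneg _
    nlinarith
  have hgs : g s = normSq (v 0) + normSq (v 1) := by
    simp [hg, hw, hE_init s, Matrix.one_mulVec]
  have hle : g t ≤ g s := hanti hst
  -- translate to norms
  have h0 : ((Matrix.toEuclideanLin.trans LinearMap.toContinuousLinearMap) (E t s) :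
      EuclideanSpace ℂ (Fin 2) →L[ℂ] EuclideanSpace ℂ (Fin 2)) x
      = (WithLp.equiv 2 (Fin 2 → ℂ)).symm (E t s *ᵥ v) := rfl
  have h1 : ‖((Matrix.toEuclideanLin.trans LinearMap.toContinuousLinearMap) (E t s) :
      EuclideanSpace ℂ (Fin 2) →L[ℂ] EuclideanSpace ℂ (Fin 2)) x‖ = Real.sqrt (g t) := by
    rw [h0, EuclideanSpace.norm_eq]
    congr 1
    simp [hg, hw, Fin.sum_univ_two, Complex.sq_norm]
  have h2 : ‖x‖ = Real.sqrt (g s) := by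
    rw [hgs, EuclideanSpace.norm_eq]
    congr 1
    simp [hv, Fin.sum_univ_two, Complex.sq_norm]
  rw [h1, h2]
  exact Real.sqrt_le_sqrt hle
end
end

section
/- With N as in Lemma 1 (so that ‖M(t,ξ)‖ ≤ e^{−βT/2} for all t and |ξ| ≥ N) and δ₀ := β/2, the fundamental solution satisfies ‖E(t,0,ξ)‖ ≤ e^{−δ₀(t−T)} for all t ≥ 0 and all ξ ∈ ℝⁿ with |ξ| ≥ N. -/
noncomputable section
open MeasureTheory Matrix Complex
open scoped Matrix.Norms.L2Operator

/-- The coefficient matrix `A(t,ξ) = [[0, ⟨ξ⟩_{m(t)}], [⟨ξ⟩_{m(t)}, 2ib(t)]]`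
with `⟨ξ⟩_{m(t)} = √(|ξ|² + m(t)²)`. -/
def sysMatrix {n : ℕ} (b m : ℝ → ℝ) (t : ℝ) (ξ : EuclideanSpace ℝ (Fin n)) :
    Matrix (Fin 2) (Fin 2) ℂ :=
  !![0, (Real.sqrt (‖ξ‖ ^ 2 + m t ^ 2) : ℂ);
     (Real.sqrt (‖ξ‖ ^ 2 + m t ^ 2) : ℂ), 2 * Complex.I * (b t : ℂ)]

/-- `E` is the fundamental solution: `∂ₜ E(t,s,ξ) = i A(t,ξ) E(t,s,ξ)`, `E(s,s,ξ) = I`. -/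
def IsFundamentalSolution {n : ℕ} (b m : ℝ → ℝ)
    (E : ℝ → ℝ → EuclideanSpace ℝ (Fin n) → Matrix (Fin 2) (Fin 2) ℂ) : Prop :=
  (∀ s ξ t, HasDerivAt (fun τ => E τ s ξ)
      (Complex.I • (sysMatrix b m t ξ * E t s ξ)) t) ∧ ∀ s ξ, E s s ξ = 1

/-- Operator norm bound for the special 2×2 matrices appearing as coefficients. -/
lemma aux_opNorm_le (a c : ℝ) :
    ‖(!![0, (a:ℂ); (a:ℂ), 2 * Complex.I * (c:ℂ)] : Matrix (Fin 2) (Fin 2) ℂ)‖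
      ≤ |a| + 2 * |c| := by
  rw [Matrix.l2_opNorm_def]
  refine ContinuousLinearMap.opNorm_le_bound _ (by positivity) fun x => ?_
  have hx : ‖x‖ = Real.sqrt (‖x 0‖ ^ 2 + ‖x 1‖ ^ 2) := by
    rw [EuclideanSpace.norm_eq, Fin.sum_univ_two]
  have hfx : ‖(Matrix.toEuclideanLin.trans LinearMap.toContinuousLinearMap)
      (!![0, (a:ℂ); (a:ℂ), 2 * Complex.I * (c:ℂ)] : Matrix (Fin 2) (Fin 2) ℂ) x‖
      = Real.sqrt (‖(a:ℂ) * x 1‖ ^ 2 + ‖(a:ℂ) * x 0 + 2 * Complex.I * (c:ℂ) * x 1‖ ^ 2) := by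
    rw [EuclideanSpace.norm_eq, Fin.sum_univ_two]
    congr 2
    · show ‖(!![0, (a:ℂ); (a:ℂ), 2 * Complex.I * (c:ℂ)] *ᵥ (fun i => x i)) 0‖ ^ 2 = _
      simp [Matrix.mulVec, dotProduct, Fin.sum_univ_two]
    · show ‖(!![0, (a:ℂ); (a:ℂ), 2 * Complex.I * (c:ℂ)] *ᵥ (fun i => x i)) 1‖ ^ 2 = _
      simp [Matrix.mulVec, dotProduct, Fin.sum_univ_two]
  rw [hfx, hx]
  rw [show (|a| + 2 * |c|) * Real.sqrt (‖x 0‖ ^ 2 + ‖x 1‖ ^ 2)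
      = Real.sqrt ((|a| + 2 * |c|) ^ 2 * (‖x 0‖ ^ 2 + ‖x 1‖ ^ 2)) by
    rw [Real.sqrt_mul (by positivity), Real.sqrt_sq (by positivity)]]
  apply Real.sqrt_le_sqrt
  have h1 : ‖(a:ℂ) * x 1‖ = |a| * ‖x 1‖ := by
    rw [norm_mul, Complex.norm_real, Real.norm_eq_abs]
  have h2 : ‖(a:ℂ) * x 0 + 2 * Complex.I * (c:ℂ) * x 1‖ ≤ |a| * ‖x 0‖ + 2 * |c| * ‖x 1‖ := by
    refine (norm_add_le _ _).trans (le_of_eq ?_)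
    simp [norm_mul, Complex.norm_real, Real.norm_eq_abs]
    try ring
  have h2' : ‖(a:ℂ) * x 0 + 2 * Complex.I * (c:ℂ) * x 1‖ ^ 2
      ≤ (|a| * ‖x 0‖ + 2 * |c| * ‖x 1‖) ^ 2 := by
    apply sq_le_sq' _ h2
    nlinarith [norm_nonneg ((a:ℂ) * x 0 + 2 * Complex.I * (c:ℂ) * x 1), abs_nonneg a,
      abs_nonneg c, norm_nonneg (x 0), norm_nonneg (x 1)]
  rw [h1]
  nlinarith [norm_nonneg (x 0), norm_nonneg (x 1), abs_nonneg a, abs_nonneg c,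
    sq_nonneg (‖x 0‖ - ‖x 1‖), mul_nonneg (abs_nonneg a) (abs_nonneg c),
    mul_nonneg (mul_nonneg (abs_nonneg a) (abs_nonneg c)) (sq_nonneg (‖x 0‖ - ‖x 1‖)),
    mul_nonneg (mul_nonneg (abs_nonneg c) (abs_nonneg c)) (mul_nonneg (norm_nonneg (x 0)) (norm_nonneg (x 0)))]

lemma key_nonpos (a c : ℝ) (hc : 0 ≤ c) (u : EuclideanSpace ℂ (Fin 2)) :
    ((inner ℂ u (Complex.I • ((WithLp.equiv 2 (Fin 2 → ℂ)).symm
        (Matrix.mulVec !![0,(a:ℂ);(a:ℂ),2*Complex.I*(c:ℂ)] (WithLp.equiv 2 (Fin 2 → ℂ) u)))) : ℂ)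
      + (inner ℂ (Complex.I • ((WithLp.equiv 2 (Fin 2 → ℂ)).symm
        (Matrix.mulVec !![0,(a:ℂ);(a:ℂ),2*Complex.I*(c:ℂ)] (WithLp.equiv 2 (Fin 2 → ℂ) u)))) u : ℂ)).re
      ≤ 0 := by
  have hmv : Matrix.mulVec !![0,(a:ℂ);(a:ℂ),2*Complex.I*(c:ℂ)] (WithLp.equiv 2 (Fin 2 → ℂ) u)
      = ![(a:ℂ) * u 1, (a:ℂ) * u 0 + 2*Complex.I*(c:ℂ) * u 1] := by
    funext i; fin_cases i <;> simp [Matrix.mulVec, dotProduct, Fin.sum_univ_two]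
  rw [hmv]
  simp only [PiLp.inner_apply, RCLike.inner_apply, Fin.sum_univ_two, PiLp.smul_apply,
    WithLp.equiv_symm_apply, WithLp.ofLp_toLp, Matrix.cons_val_zero, Matrix.cons_val_one, Matrix.head_cons,
    smul_eq_mul, _root_.map_mul, Complex.conj_I, Complex.conj_ofReal, map_add]
  simp only [Complex.add_re, Complex.mul_re, Complex.mul_im, Complex.conj_re, Complex.conj_im,
    Complex.I_re, Complex.I_im, Complex.ofReal_re, Complex.ofReal_im, Complex.add_im,
    Complex.neg_re, Complex.neg_im, Complex.re_ofNat, Complex.im_ofNat]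
  ring_nf
  nlinarith [sq_nonneg ((u 1).re), sq_nonneg ((u 1).im), mul_nonneg hc (sq_nonneg ((u 1).re)),
    mul_nonneg hc (sq_nonneg ((u 1).im))]

lemma contraction {n : ℕ} (b m : ℝ → ℝ) (hb_nonneg : ∀ t, 0 ≤ b t)
    (E : ℝ → ℝ → EuclideanSpace ℝ (Fin n) → Matrix (Fin 2) (Fin 2) ℂ)
    (hE : IsFundamentalSolution b m E) (ξ : EuclideanSpace ℝ (Fin n))
    {s t : ℝ} (hst : s ≤ t) : ‖E t s ξ‖ ≤ 1 := by
  rw [Matrix.l2_opNorm_def]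
  refine ContinuousLinearMap.opNorm_le_bound _ zero_le_one fun x => ?_
  rw [one_mul]
  set y : Fin 2 → ℂ := WithLp.equiv 2 (Fin 2 → ℂ) x with hy
  set f : ℝ → EuclideanSpace ℂ (Fin 2) :=
    fun τ => (WithLp.equiv 2 (Fin 2 → ℂ)).symm (Matrix.mulVec (E τ s ξ) y) with hfdef
  have hmain : ‖f t‖ ≤ ‖x‖ := by
    -- the linear map M ↦ (M *ᵥ y) as a continuous linear map
    let L0 : Matrix (Fin 2) (Fin 2) ℂ →ₗ[ℂ] EuclideanSpace ℂ (Fin 2) :=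
      { toFun := fun M => (WithLp.equiv 2 (Fin 2 → ℂ)).symm (Matrix.mulVec M y)
        map_add' := fun M N => by
          simp only [Matrix.add_mulVec]; rfl
        map_smul' := fun c M => by
          simp only [Matrix.smul_mulVec, RingHom.id_apply]; rfl }
    let L : Matrix (Fin 2) (Fin 2) ℂ →L[ℂ] EuclideanSpace ℂ (Fin 2) :=
      LinearMap.toContinuousLinearMap L0
    have hLapp : ∀ M, L M = (WithLp.equiv 2 (Fin 2 → ℂ)).symm (Matrix.mulVec M y) := fun _ => rfl
    have hfd : ∀ τ, HasDerivAt f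
        (Complex.I • ((WithLp.equiv 2 (Fin 2 → ℂ)).symm
          (Matrix.mulVec (sysMatrix b m τ ξ) (Matrix.mulVec (E τ s ξ) y)))) τ := by
      intro τ
      have h1 : HasDerivAt f (L (Complex.I • (sysMatrix b m τ ξ * E τ s ξ))) τ :=
        by have := ((L.restrictScalars ℝ).hasFDerivAt (x := E τ s ξ)).comp_hasDerivAt τ (hE.1 s ξ τ); exact this
      have h2 : L (Complex.I • (sysMatrix b m τ ξ * E τ s ξ))
          = Complex.I • ((WithLp.equiv 2 (Fin 2 → ℂ)).symm
            (Matrix.mulVec (sysMatrix b m τ ξ) (Matrix.mulVec (E τ s ξ) y))) := by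
        rw [hLapp, Matrix.smul_mulVec, Matrix.mulVec_mulVec]
        rfl
      rw [h2] at h1
      exact h1
    set h : ℝ → ℝ := fun τ => (inner ℂ (f τ) (f τ) : ℂ).re with hhdef
    have hD : ∀ τ, HasDerivAt h
        (((inner ℂ (f τ) (Complex.I • ((WithLp.equiv 2 (Fin 2 → ℂ)).symm
            (Matrix.mulVec (sysMatrix b m τ ξ) (Matrix.mulVec (E τ s ξ) y)))) : ℂ)
          + (inner ℂ (Complex.I • ((WithLp.equiv 2 (Fin 2 → ℂ)).symm
            (Matrix.mulVec (sysMatrix b m τ ξ) (Matrix.mulVec (E τ s ξ) y)))) (f τ) : ℂ)).re) τ := by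
      intro τ
      exact Complex.reCLM.hasFDerivAt.comp_hasDerivAt τ (HasDerivAt.inner ℂ (hfd τ) (hfd τ))
    have hanti : Antitone h := by
      apply antitone_of_deriv_nonpos
      · exact fun τ => (hD τ).differentiableAt
      · intro τ
        rw [(hD τ).deriv]
        have : Matrix.mulVec (E τ s ξ) y = WithLp.equiv 2 (Fin 2 → ℂ) (f τ) := rfl
        rw [this]
        simpa only [sysMatrix] using key_nonpos _ (b τ) (hb_nonneg τ) (f τ)
    have hnorm : ∀ τ, h τ = ‖f τ‖ ^ 2 := by
      intro τ
      show (inner ℂ (f τ) (f τ) : ℂ).re = ‖f τ‖ ^ 2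
      exact inner_self_eq_norm_sq (𝕜 := ℂ) (f τ)
    have hfs : f s = x := by
      rw [hfdef]
      simp only [hE.2 s ξ, Matrix.one_mulVec]
      exact (WithLp.equiv 2 (Fin 2 → ℂ)).symm_apply_apply x
    have := hanti hst
    rw [hnorm t, hnorm s, hfs] at this
    have h1 := Real.sqrt_le_sqrt this
    rwa [Real.sqrt_sq (norm_nonneg _), Real.sqrt_sq (norm_nonneg _)] at h1
  have hfin : ((Matrix.toEuclideanLin.trans LinearMap.toContinuousLinearMap) (E t s ξ)) x = f t := rfl
  rw [hfin]
  exact hmain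

lemma sysMatrix_norm_le {n : ℕ} (b m : ℝ → ℝ) (hb_nonneg : ∀ t, 0 ≤ b t) {Cm Bb : ℝ}
    (hm : ∀ t, |m t| ≤ Cm) (hb : ∀ t, b t ≤ Bb) (ξ : EuclideanSpace ℝ (Fin n)) (t : ℝ) :
    ‖sysMatrix b m t ξ‖ ≤ Real.sqrt (‖ξ‖ ^ 2 + Cm ^ 2) + 2 * Bb := by
  refine le_trans (aux_opNorm_le (Real.sqrt (‖ξ‖ ^ 2 + m t ^ 2)) (b t)) ?_
  have h1 : |Real.sqrt (‖ξ‖ ^ 2 + m t ^ 2)| ≤ Real.sqrt (‖ξ‖ ^ 2 + Cm ^ 2) := by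
    rw [_root_.abs_of_nonneg (Real.sqrt_nonneg _)]
    apply Real.sqrt_le_sqrt
    nlinarith [hm t, abs_nonneg (m t), _root_.sq_abs (m t)]
  have h2 : |b t| ≤ Bb := by rw [_root_.abs_of_nonneg (hb_nonneg t)]; exact hb t
  linarith

lemma sysODE_lip {n : ℕ} (b m : ℝ → ℝ) (hb_nonneg : ∀ t, 0 ≤ b t) {Cm Bb : ℝ}
    (hm : ∀ t, |m t| ≤ Cm) (hb : ∀ t, b t ≤ Bb) (ξ : EuclideanSpace ℝ (Fin n)) :
    ∀ t, LipschitzWith (Real.toNNReal (Real.sqrt (‖ξ‖ ^ 2 + Cm ^ 2) + 2 * Bb))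
      (fun X : Matrix (Fin 2) (Fin 2) ℂ => Complex.I • (sysMatrix b m t ξ * X)) := by
  intro t
  have hC : 0 ≤ Real.sqrt (‖ξ‖ ^ 2 + Cm ^ 2) + 2 * Bb :=
    le_trans (norm_nonneg (sysMatrix b m t ξ)) (sysMatrix_norm_le b m hb_nonneg hm hb ξ t)
  apply LipschitzWith.of_dist_le_mul
  intro X Y
  rw [dist_eq_norm, dist_eq_norm, ← smul_sub, ← mul_sub, norm_smul, Complex.norm_I, one_mul,
    Real.coe_toNNReal _ hC]
  exact le_trans (norm_mul_le _ _)
    (mul_le_mul_of_nonneg_right (sysMatrix_norm_le b m hb_nonneg hm hb ξ t) (norm_nonneg _))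

lemma cocycle {n : ℕ} (b m : ℝ → ℝ) (hb_nonneg : ∀ t, 0 ≤ b t) {Cm Bb : ℝ}
    (hm : ∀ t, |m t| ≤ Cm) (hb : ∀ t, b t ≤ Bb)
    (E : ℝ → ℝ → EuclideanSpace ℝ (Fin n) → Matrix (Fin 2) (Fin 2) ℂ)
    (hE : IsFundamentalSolution b m E) (ξ : EuclideanSpace ℝ (Fin n))
    {r s t : ℝ} (hst : s ≤ t) :
    E t r ξ = E t s ξ * E s r ξ := by
  have hlip := sysODE_lip b m hb_nonneg hm hb ξ
  have hcf : ContinuousOn (fun τ => E τ r ξ) (Set.Icc s t) :=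
    fun τ _ => ((hE.1 r ξ τ).continuousAt).continuousWithinAt
  have hcg : ContinuousOn (fun τ => E τ s ξ * E s r ξ) (Set.Icc s t) :=
    fun τ _ => (((hE.1 s ξ τ).mul_const (E s r ξ)).continuousAt).continuousWithinAt
  have key := ODE_solution_unique (v := fun τ X => Complex.I • (sysMatrix b m τ ξ * X))
      (f := fun τ => E τ r ξ) (g := fun τ => E τ s ξ * E s r ξ) (a := s) (b := t)
      hlip hcf
      (fun τ _ => (hE.1 r ξ τ).hasDerivWithinAt)
      hcg
      (fun τ _ => by
        have hd := (hE.1 s ξ τ).mul_const (E s r ξ)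
        rw [smul_mul_assoc, mul_assoc] at hd
        exact hd.hasDerivWithinAt)
      (by show E s r ξ = E s s ξ * E s r ξ; rw [hE.2 s ξ, one_mul])
  exact key (Set.right_mem_Icc.mpr hst)

/-- Given the conclusion of Lemma 1 (`‖M(t,ξ)‖ ≤ e^{-βT/2}` for `|ξ| ≥ N`) and
`δ₀ = β/2`, the fundamental solution decays: `‖E(t,0,ξ)‖ ≤ e^{-δ₀(t-T)}` for all
`t ≥ 0` and `|ξ| ≥ N`. -/
theorem decay_large_frequencies
    {n : ℕ} (T : ℝ) (hT : 0 < T)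
    (b : ℝ → ℝ) (hb_cont : Continuous b) (hb_nonneg : ∀ t, 0 ≤ b t)
    (hb_per : Function.Periodic b T)
    (Lb : NNReal) (hb_lip : LipschitzWith Lb b)
    (hb_ne : ∃ t, b t ≠ 0)
    (β : ℝ) (hβ : β = (1 / T) * ∫ τ in (0:ℝ)..T, b τ) (hβ_pos : 0 < β)
    (m : ℝ → ℝ) (hm_meas : Measurable m) (hm_bdd : ∃ Cm : ℝ, ∀ t, |m t| ≤ Cm)
    (hm_nonneg : ∀ t, 0 ≤ m t) (hm_per : Function.Periodic m T)
    (E : ℝ → ℝ → EuclideanSpace ℝ (Fin n) → Matrix (Fin 2) (Fin 2) ℂ)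
    (hE : IsFundamentalSolution b m E)
    (N : ℝ) (hN : 0 < N)
    (hM : ∀ (t : ℝ) (ξ : EuclideanSpace ℝ (Fin n)), N ≤ ‖ξ‖ →
      ‖E (t + T) t ξ‖ ≤ Real.exp (-β * T / 2)) :
    ∀ t ≥ (0 : ℝ), ∀ ξ : EuclideanSpace ℝ (Fin n), N ≤ ‖ξ‖ →
      ‖E t 0 ξ‖ ≤ Real.exp (-(β / 2) * (t - T)) := by
  intro t ht ξ hξ
  obtain ⟨Cm, hm⟩ := hm_bdd
  obtain ⟨Bb, hBb⟩ : ∃ Bb, ∀ τ, b τ ≤ Bb := by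
    obtain ⟨C, hC⟩ := (isCompact_Icc (a := (0:ℝ)) (b := T)).exists_bound_of_continuousOn
      hb_cont.continuousOn
    refine ⟨C, fun τ => ?_⟩
    obtain ⟨y, hy, hyeq⟩ := hb_per.exists_mem_Ico₀ hT τ
    calc b τ = b y := hyeq
      _ ≤ ‖b y‖ := le_abs_self _
      _ ≤ C := hC y ⟨hy.1, hy.2.le⟩
  set k := ⌊t / T⌋₊ with hk
  have hkle : (k : ℝ) * T ≤ t := by
    have h1 : (k : ℝ) ≤ t / T := Nat.floor_le (div_nonneg ht hT.le)
    calc (k : ℝ) * T ≤ (t / T) * T := mul_le_mul_of_nonneg_right h1 hT.le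
      _ = t := div_mul_cancel₀ t hT.ne'
  have hklt : t < ((k : ℝ) + 1) * T := by
    have h1 : t / T < (k : ℝ) + 1 := Nat.lt_floor_add_one (t / T)
    calc t = (t / T) * T := (div_mul_cancel₀ t hT.ne').symm
      _ < ((k : ℝ) + 1) * T := mul_lt_mul_of_pos_right h1 hT
  have hstep : ∀ j : ℕ, ‖E ((j : ℝ) * T) 0 ξ‖ ≤ Real.exp (-β * T / 2) ^ j := by
    intro j
    induction j with
    | zero =>
      simpa using contraction b m hb_nonneg E hE ξ (le_refl (0:ℝ))
    | succ j ih =>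
      have hjT : (0:ℝ) ≤ (j : ℝ) * T := by positivity
      have hco := cocycle b m hb_nonneg hm hBb E hE ξ
        (r := 0) (s := (j : ℝ) * T) (t := ((j : ℝ) + 1) * T) (by nlinarith)
      have hcast : ((j + 1 : ℕ) : ℝ) * T = ((j : ℝ) + 1) * T := by push_cast; ring
      rw [hcast, hco]
      have hMj : ‖E (((j : ℝ)) * T + T) ((j : ℝ) * T) ξ‖ ≤ Real.exp (-β * T / 2) :=
        hM ((j : ℝ) * T) ξ hξ
      have heq : ((j : ℝ) + 1) * T = (j : ℝ) * T + T := by ring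
      calc ‖E (((j : ℝ) + 1) * T) ((j : ℝ) * T) ξ * E ((j : ℝ) * T) 0 ξ‖
          ≤ ‖E (((j : ℝ) + 1) * T) ((j : ℝ) * T) ξ‖ * ‖E ((j : ℝ) * T) 0 ξ‖ := norm_mul_le _ _
        _ ≤ Real.exp (-β * T / 2) * Real.exp (-β * T / 2) ^ j := by
            refine mul_le_mul ?_ ih (norm_nonneg _) (Real.exp_pos _).le
            rw [heq]; exact hMj
        _ = Real.exp (-β * T / 2) ^ (j + 1) := by ring
  have h1 : ‖E t 0 ξ‖ ≤ Real.exp (-β * T / 2) ^ k := by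
    have hco := cocycle b m hb_nonneg hm hBb E hE ξ
      (r := 0) (s := (k : ℝ) * T) (t := t) hkle
    rw [hco]
    calc ‖E t ((k : ℝ) * T) ξ * E ((k : ℝ) * T) 0 ξ‖
        ≤ ‖E t ((k : ℝ) * T) ξ‖ * ‖E ((k : ℝ) * T) 0 ξ‖ := norm_mul_le _ _
      _ ≤ 1 * Real.exp (-β * T / 2) ^ k := by
          refine mul_le_mul (contraction b m hb_nonneg E hE ξ hkle) (hstep k)
            (norm_nonneg _) zero_le_one
      _ = Real.exp (-β * T / 2) ^ k := one_mul _
  refine h1.trans ?_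
  rw [← Real.exp_nat_mul]
  apply Real.exp_le_exp.mpr
  have h2 : (β / 2) * (t - T) ≤ (β / 2) * ((k : ℝ) * T) :=
    mul_le_mul_of_nonneg_left (by linarith) (by linarith)
  have h3 : (k : ℝ) * (-β * T / 2) = -((β / 2) * ((k : ℝ) * T)) := by ring
  rw [h3]
  linarith
end
end

section
/- Let b : ℝ → ℝ be continuous, non-negative, T-periodic with ∫₀ᵀ b(t)dt > 0, and let ω > 0. If f : ℝ → ℝ is a twice continuously differentiable solution of f''(t) + 2b(t)f'(t) + ω²f(t) = 0 which is P-periodic for some P > 0, then f ≡ 0. (Energy argument: E(t) = ½|f'(t)|² + ½ω²|f(t)|² satisfies E'(t) = −2b(t)|f'(t)|², so periodicity forces ∫ b|f'|² = 0 over each period, which by uniqueness of solutions forces f ≡ 0.) -/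
/-!
The energy `E = ½ f'² + ½ ω² f²` satisfies `E' = -2 b f'² ≤ 0`, so it is antitone; being also
periodic, it is constant. Hence `b f'² ≡ 0`, so `f'` vanishes on the open set `{b ≠ 0}`, which is
nonempty because `∫₀ᵀ b ≠ 0`. At a point `t₀` of that set also `f''(t₀) = 0`, and the equation
gives `f(t₀) = 0`; thus `E(t₀) = 0`, and the constant energy forces `f ≡ 0`.
-/

open Filter Topology

theorem Function.Periodic.deriv {f : ℝ → ℝ} {P : ℝ} (hf : Function.Periodic f P) :
    Function.Periodic (deriv f) P := fun t => by
  rw [← deriv_comp_add_const, hf.funext]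

theorem Function.Periodic.eq_of_antitone {α β : Type*} [AddCommGroup α] [LinearOrder α]
    [IsOrderedAddMonoid α] [Archimedean α] [PartialOrder β] {g : α → β} {P : α}
    (hg : Function.Periodic g P) (hP : 0 < P) (hanti : Antitone g) (s u : α) : g s = g u := by
  wlog hsu : s ≤ u generalizing s u
  · exact (this u s (le_of_not_ge hsu)).symm
  obtain ⟨n, hn⟩ := Archimedean.arch (u - s) hP
  have hu : u ≤ s + n • P := by rw [add_comm]; exact sub_le_iff_le_add.mp hn
  refine le_antisymm ?_ (hanti hsu)
  calc g s = g (s + n • P) := ((hg.nsmul n) s).symm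
    _ ≤ g u := hanti hu

theorem exists_ne_zero_of_intervalIntegral_ne_zero {f : ℝ → ℝ} {a b : ℝ}
    (h : ∫ t in a..b, f t ≠ 0) : ∃ t, f t ≠ 0 := by
  by_contra! hf
  simp [hf] at h

theorem deriv_eq_zero_of_eventuallyEq_zero {g : ℝ → ℝ} {t : ℝ} (hg : g =ᶠ[𝓝 t] 0) :
    deriv g t = 0 := by
  simp [hg.deriv_eq]

noncomputable def oscillatorEnergy (ω : ℝ) (f : ℝ → ℝ) (t : ℝ) : ℝ :=
  deriv f t ^ 2 / 2 + ω ^ 2 * f t ^ 2 / 2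

theorem hasDerivAt_oscillatorEnergy {ω : ℝ} {f : ℝ → ℝ} (hf : ContDiff ℝ 2 f) {c : ℝ} {t : ℝ}
    (hode : deriv (deriv f) t + c * deriv f t + ω ^ 2 * f t = 0) :
    HasDerivAt (oscillatorEnergy ω f) (-(c * deriv f t ^ 2)) t := by
  have hf' := (hf.differentiable (by norm_num) t).hasDerivAt
  have hf'' := (hf.differentiable_deriv_two t).hasDerivAt
  have hE := ((hf''.pow 2).div_const 2).add (((hf'.pow 2).const_mul (ω ^ 2)).div_const 2)
  refine hE.congr_deriv ?_
  linear_combination deriv f t * hode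

theorem eq_zero_of_oscillatorEnergy_eq_zero {ω : ℝ} (hω : ω ≠ 0) {f : ℝ → ℝ} {t : ℝ}
    (hE : oscillatorEnergy ω f t = 0) : f t = 0 := by
  unfold oscillatorEnergy at hE
  have : ω ^ 2 * f t ^ 2 = 0 := by nlinarith [sq_nonneg (deriv f t), sq_nonneg (ω * f t)]
  simpa [hω] using this

theorem oscillatorEnergy_periodic {ω P : ℝ} {f : ℝ → ℝ} (hf : Function.Periodic f P) :
    Function.Periodic (oscillatorEnergy ω f) P := fun t => by
  simp only [oscillatorEnergy, hf t, hf.deriv t]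

theorem periodic_solution_damped_oscillator_trivial_general
    (T : ℝ)
    (b : ℝ → ℝ) (hb_cont : Continuous b) (hb_nonneg : ∀ t, 0 ≤ b t)
    (hb_int : 0 < ∫ t in (0:ℝ)..T, b t)
    (ω : ℝ) (hω : 0 < ω)
    (f : ℝ → ℝ) (hf : ContDiff ℝ 2 f)
    (hode : ∀ t, deriv (deriv f) t + 2 * b t * deriv f t + ω ^ 2 * f t = 0)
    (P : ℝ) (hP : 0 < P) (hfP : Function.Periodic f P) :
    ∀ t, f t = 0 := by
  have hE t := hasDerivAt_oscillatorEnergy hf (hode t)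
  have hE_const : ∀ s u, oscillatorEnergy ω f s = oscillatorEnergy ω f u :=
    (oscillatorEnergy_periodic hfP).eq_of_antitone hP <|
      antitone_of_hasDerivAt_nonpos hE fun t => neg_nonpos.mpr <| by
        have := hb_nonneg t; positivity
  have hbf' t : b t * deriv f t ^ 2 = 0 := by
    have := (hE t).unique (hasDerivAt_const t (oscillatorEnergy ω f 0) |>.congr_of_eventuallyEq
      (Eventually.of_forall fun s => hE_const s 0))
    linarith
  obtain ⟨t₀, hbt₀⟩ := exists_ne_zero_of_intervalIntegral_ne_zero hb_int.ne'
  have hf'_zero : deriv f =ᶠ[𝓝 t₀] 0 := by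
    filter_upwards [hb_cont.continuousAt.eventually_ne hbt₀] with t ht
    simpa [ht] using hbf' t
  have hft₀ : f t₀ = 0 := by
    have := hode t₀
    rw [deriv_eq_zero_of_eventuallyEq_zero hf'_zero, hf'_zero.self_of_nhds] at this
    simpa [hω.ne'] using this
  intro t
  refine eq_zero_of_oscillatorEnergy_eq_zero hω.ne' ?_
  rw [hE_const t t₀, oscillatorEnergy, hf'_zero.self_of_nhds, hft₀, Pi.zero_apply]
  ring

/-- Energy argument: a periodic, twice continuously differentiable real solution of
`f'' + 2b(t)f' + ω²f = 0` with `b` continuous, non-negative, `T`-periodic,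
`∫₀ᵀ b > 0` and `ω > 0` must vanish identically. -/
theorem periodic_solution_damped_oscillator_trivial
    (T : ℝ) (hT : 0 < T)
    (b : ℝ → ℝ) (hb_cont : Continuous b) (hb_nonneg : ∀ t, 0 ≤ b t)
    (hb_per : Function.Periodic b T) (hb_int : 0 < ∫ t in (0:ℝ)..T, b t)
    (ω : ℝ) (hω : 0 < ω)
    (f : ℝ → ℝ) (hf : ContDiff ℝ 2 f)
    (hode : ∀ t, deriv (deriv f) t + 2 * b t * deriv f t + ω ^ 2 * f t = 0)
    (P : ℝ) (hP : 0 < P) (hfP : Function.Periodic f P) :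
    ∀ t, f t = 0 :=
  periodic_solution_damped_oscillator_trivial_general T b hb_cont hb_nonneg hb_int ω hω f hf hode P
    hP hfP
end

section
/- Let K be a compact topological space and F : K → M_n(ℂ) a continuous matrix-valued map such that the spectral radius satisfies ρ(F(x)) < 1 for every x ∈ K. Then there exists k ∈ ℕ such that sup_{x ∈ K} ‖F(x)^k‖ < 1. -/
noncomputable section
open Matrix Filter
open scoped Matrix.Norms.L2Operator

/-- If `F : K → Mₙ(ℂ)` is continuous on a compact space `K` and `ρ(F(x)) < 1` for
every `x`, then there is a `k ∈ ℕ` with `sup_{x ∈ K} ‖F(x)^k‖ < 1`. -/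
theorem uniform_power_contraction_of_spectral_radius_lt_one
    {n : ℕ} (hn : 1 ≤ n)
    (K : Type*) [TopologicalSpace K] [CompactSpace K]
    (F : K → Matrix (Fin n) (Fin n) ℂ) (hF_cont : Continuous F)
    (hρ : ∀ x, spectralRadius ℂ (F x) < 1) :
    ∃ k : ℕ, ∃ c : ℝ, c < 1 ∧ ∀ x, ‖F x ^ k‖ ≤ c := by
  -- open sets U k = {x | ‖F x ^ (k+1)‖ < 1}
  set U : ℕ → Set K := fun k => {x | ‖F x ^ (k + 1)‖ < 1} with hU
  have hUopen : ∀ k, IsOpen (U k) := by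
    intro k
    have : Continuous fun x => ‖F x ^ (k + 1)‖ := (hF_cont.pow _).norm
    exact isOpen_lt this continuous_const
  have hcover : (Set.univ : Set K) ⊆ ⋃ k, U k := by
    intro x _
    have hGel := spectrum.pow_nnnorm_pow_one_div_tendsto_nhds_spectralRadius (F x)
    have hev : ∀ᶠ k : ℕ in atTop, (‖F x ^ k‖₊ : ENNReal) ^ (1 / (k : ℝ)) < 1 :=
      hGel.eventually_lt_const (hρ x)
    obtain ⟨k, hklt, hk1⟩ := (hev.and (eventually_ge_atTop 1)).exists
    have hkpos : (0 : ℝ) < 1 / (k : ℝ) := by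
      have : (0 : ℝ) < (k : ℝ) := by exact_mod_cast hk1
      positivity
    have hnorm : ‖F x ^ k‖ < 1 := by
      by_contra h
      push_neg at h
      have h1 : (1 : ENNReal) ≤ (‖F x ^ k‖₊ : ENNReal) := by
        rw [← ENNReal.coe_one, ENNReal.coe_le_coe]
        exact_mod_cast h
      have : (1 : ENNReal) ≤ (‖F x ^ k‖₊ : ENNReal) ^ (1 / (k : ℝ)) := by
        calc (1 : ENNReal) = 1 ^ (1 / (k : ℝ)) := (ENNReal.one_rpow _).symm
        _ ≤ _ := ENNReal.rpow_le_rpow h1 hkpos.le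
      exact absurd hklt (not_lt.mpr this)
    refine Set.mem_iUnion.mpr ⟨k - 1, ?_⟩
    simpa [hU, Nat.sub_add_cancel hk1] using hnorm
  obtain ⟨s, hs⟩ := isCompact_univ.elim_finite_subcover U hUopen hcover
  set m : ℕ := ∏ k ∈ s, (k + 1) with hm
  have hmain : ∀ x, ‖F x ^ m‖ < 1 := by
    intro x
    obtain ⟨k, hks, hxk⟩ := Set.mem_iUnion₂.mp (hs (Set.mem_univ x))
    have hdvd : (k + 1) ∣ m := Finset.dvd_prod_of_mem _ hks
    obtain ⟨j, hj⟩ := hdvd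
    have hjpos : j ≠ 0 := by
      rintro rfl
      have : m = 0 := by simp [hj]
      exact absurd this (by positivity)
    calc ‖F x ^ m‖ = ‖(F x ^ (k + 1)) ^ j‖ := by rw [← pow_mul, ← hj]
    _ ≤ ‖F x ^ (k + 1)‖ ^ j := norm_pow_le' _ (Nat.pos_of_ne_zero hjpos)
    _ < 1 := pow_lt_one₀ (norm_nonneg _) hxk hjpos
  by_cases hK : Nonempty K
  · obtain ⟨x₀, -, hx₀⟩ := isCompact_univ.exists_isMaxOn Set.univ_nonempty
      ((hF_cont.pow m).norm.continuousOn)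
    exact ⟨m, ‖F x₀ ^ m‖, hmain x₀, fun x => hx₀ (Set.mem_univ x)⟩
  · exact ⟨1, 0, by norm_num, fun x => absurd ⟨x⟩ hK⟩
end
end
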